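/- Let m ≥ 3 be odd, f a quadratic polynomial over Z/mZ in n variables, and f' = f + a x_i x_j with a ∈ Z/mZ (an added edge). Then for every subset S ⊆ {1,...,n}, |ĉ_S(f')| ≤ √2 · max_T |ĉ_T(f)|, where ĉ_S denotes the Fourier coefficient 2^{-n} Σ_{x∈{-1,1}^n} (Π_{i∈S} x_i) ω^{f(x)}. -/

import Mathlib

/-- The Fourier coefficient `ĉ_S(f) = 2^{-n} Σ_{x ∈ {-1,1}^n} (Π_{i∈S} x_i) ω^{f(x)}` of
`ω^f` on the hypercube, where `f(x) = Σ_{p<q} A_{pq} x_p x_q + Σ_p b_p x_p`. -/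
noncomputable def fourierCoeffQuad' (m n : ℕ) (A : Fin n → Fin n → ZMod m)
    (b : Fin n → ZMod m) (S : Finset (Fin n)) : ℂ :=
  (1 / 2 ^ n) * ∑ x : Fin n → Bool,
    (∏ i ∈ S, (if x i then (1 : ℂ) else -1)) *
      Complex.exp (2 * (Real.pi : ℂ) * Complex.I *
        (((∑ p ∈ Finset.univ.filter (fun p : Fin n × Fin n => p.1 < p.2),
              ((A p.1 p.2).val : ℤ) * (if x p.1 then (1 : ℤ) else -1) *
                (if x p.2 then (1 : ℤ) else -1)) +
            ∑ p, ((b p).val : ℤ) * (if x p then (1 : ℤ) else -1) : ℤ) : ℂ) / (m : ℂ))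

/-!
Write `θ = 2π a / m` and `s = x_i x_j ∈ {±1}`. The added edge multiplies `ω^{f(x)}` by
`ω^{a s} = cos θ + s · i sin θ`, and multiplying by the Walsh character `s = χ_{{i,j}}` shifts
Fourier coefficients from `S` to `S △ {i,j}`. Hence
`ĉ_S(f') = cos θ · ĉ_S(f) + i sin θ · ĉ_{S △ {i,j}}(f)`, and `|cos θ| + |sin θ| ≤ √2`.
-/

open Finset Complex
open scoped Real

noncomputable def expMod (m : ℕ) (t : ℤ) : ℂ :=
  Complex.exp (2 * π * I * t / m)

lemma expMod_add (m : ℕ) (s t : ℤ) : expMod m (s + t) = expMod m s * expMod m t := by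
  rw [expMod, expMod, expMod, ← Complex.exp_add]
  push_cast
  ring_nf

lemma expMod_congr {m : ℕ} {s t : ℤ} (h : s ≡ t [ZMOD m]) : expMod m s = expMod m t := by
  obtain ⟨k, hk⟩ := h.symm.dvd
  obtain rfl : s = t + m * k := by omega
  rcases eq_or_ne m 0 with rfl | hm
  · simp [expMod]
  · rw [expMod_add, expMod, expMod]
    push_cast
    rw [show 2 * π * I * (m * k) / m = k * (2 * π * I) by field_simp,
      Complex.exp_int_mul_two_pi_mul_I, mul_one]

lemma expMod_eq_exp_mul_I (m : ℕ) (t : ℤ) :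
    expMod m t = Complex.exp ((2 * π * t / m : ℝ) * I) := by
  rw [expMod]
  push_cast
  ring_nf

lemma exp_sign_mul_mul_I {ε : ℂ} (hε : ε = 1 ∨ ε = -1) (θ : ℂ) :
    Complex.exp (ε * θ * I) = cos θ + ε * (sin θ * I) := by
  rcases hε with rfl | rfl
  · simp [Complex.exp_mul_I]
  · rw [neg_one_mul, neg_mul, ← neg_mul, Complex.exp_mul_I, Complex.cos_neg, Complex.sin_neg]
    ring

lemma expMod_mul_of_isUnit (m : ℕ) (c : ℤ) {ε : ℤ} (hε : IsUnit ε) :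
    expMod m (c * ε) = Real.cos (2 * π * c / m) + ε * (Real.sin (2 * π * c / m) * I) := by
  rw [expMod_eq_exp_mul_I]
  push_cast
  rw [show 2 * π * (c * ε) / m * I = ε * (2 * π * c / m) * I by ring,
    exp_sign_mul_mul_I (by exact_mod_cast Int.isUnit_iff.mp hε)]

lemma Real.abs_cos_add_abs_sin_le (θ : ℝ) : |Real.cos θ| + |Real.sin θ| ≤ Real.sqrt 2 := by
  apply Real.le_sqrt_of_sq_le
  nlinarith [Real.sin_sq_add_cos_sq θ, sq_abs (Real.cos θ), sq_abs (Real.sin θ),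
    sq_nonneg (|Real.cos θ| - |Real.sin θ|)]

lemma norm_cos_mul_add_sin_mul_I_mul_le (θ : ℝ) {u v : ℂ} {M : ℝ} (hu : ‖u‖ ≤ M)
    (hv : ‖v‖ ≤ M) : ‖Real.cos θ * u + Real.sin θ * I * v‖ ≤ Real.sqrt 2 * M := by
  have hM : 0 ≤ M := (norm_nonneg u).trans hu
  calc ‖Real.cos θ * u + Real.sin θ * I * v‖
      ≤ |Real.cos θ| * ‖u‖ + |Real.sin θ| * ‖v‖ := by
        refine (norm_add_le _ _).trans_eq ?_
        rw [norm_mul, norm_mul, norm_mul, Complex.norm_I, mul_one, Complex.norm_real,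
          Complex.norm_real, Real.norm_eq_abs, Real.norm_eq_abs]
    _ ≤ (|Real.cos θ| + |Real.sin θ|) * M := by
        rw [add_mul]
        gcongr
    _ ≤ Real.sqrt 2 * M := by
        gcongr
        exact Real.abs_cos_add_abs_sin_le θ

lemma Finset.prod_symmDiff_of_mul_self_eq_one {α β : Type*} [DecidableEq α] [CommMonoid β]
    {g : α → β} (hg : ∀ k, g k * g k = 1) (S T : Finset α) :
    ∏ k ∈ symmDiff S T, g k = (∏ k ∈ S, g k) * ∏ k ∈ T, g k := by
  have hsdiff : (∏ k ∈ symmDiff S T, g k) * ∏ k ∈ S ∩ T, g k = ∏ k ∈ S ∪ T, g k := by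
    rw [symmDiff_eq_sup_sdiff_inf]
    exact prod_sdiff inter_subset_union
  have hsq : (∏ k ∈ S ∩ T, g k) * ∏ k ∈ S ∩ T, g k = 1 := by
    rw [← prod_mul_distrib]
    exact prod_eq_one fun k _ => hg k
  calc ∏ k ∈ symmDiff S T, g k
      = (∏ k ∈ symmDiff S T, g k) * (∏ k ∈ S ∩ T, g k) * ∏ k ∈ S ∩ T, g k := by
        rw [mul_assoc, hsq, mul_one]
    _ = (∏ k ∈ S, g k) * ∏ k ∈ T, g k := by rw [hsdiff, prod_union_inter]

section Walsh

variable {ι R : Type*}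

def boolSign [Ring R] (b : Bool) : R := if b then 1 else -1

lemma boolSign_mul_self [Ring R] (b : Bool) : (boolSign b : R) * boolSign b = 1 := by
  cases b <;> simp [boolSign]

lemma boolSign_isUnit [Ring R] (b : Bool) : IsUnit (boolSign b : R) :=
  ⟨⟨boolSign b, boolSign b, boolSign_mul_self b, boolSign_mul_self b⟩, rfl⟩

@[simp, norm_cast]
lemma Int.cast_boolSign [Ring R] (b : Bool) : ((boolSign b : ℤ) : R) = boolSign b := by
  cases b <;> simp [boolSign]

variable [CommRing R]

def walsh (S : Finset ι) (x : ι → Bool) : R := ∏ k ∈ S, boolSign (x k)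

lemma walsh_isUnit (S : Finset ι) (x : ι → Bool) : IsUnit (walsh S x : R) :=
  IsUnit.prod_iff.mpr fun _ _ => boolSign_isUnit _

@[simp, norm_cast]
lemma Int.cast_walsh (S : Finset ι) (x : ι → Bool) : ((walsh S x : ℤ) : R) = walsh S x := by
  simp [walsh]

lemma walsh_symmDiff [DecidableEq ι] (S T : Finset ι) (x : ι → Bool) :
    (walsh (symmDiff S T) x : R) = walsh S x * walsh T x :=
  prod_symmDiff_of_mul_self_eq_one (fun k => boolSign_mul_self (x k)) S T

lemma walsh_pair [DecidableEq ι] {i j : ι} (hij : i ≠ j) (x : ι → Bool) :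
    (walsh {i, j} x : R) = boolSign (x i) * boolSign (x j) :=
  prod_pair hij

variable [Fintype ι] [DecidableEq ι]

noncomputable def walshCoeff (φ : (ι → Bool) → ℂ) (S : Finset ι) : ℂ :=
  (1 / 2 ^ Fintype.card ι) * ∑ x, walsh S x * φ x

lemma walshCoeff_const_add_walsh_mul (c d : ℂ) (T : Finset ι) (φ : (ι → Bool) → ℂ)
    (S : Finset ι) :
    walshCoeff (fun x => (c + walsh T x * d) * φ x) S =
      c * walshCoeff φ S + d * walshCoeff φ (symmDiff S T) := by
  simp only [walshCoeff, walsh_symmDiff, mul_add, add_mul, sum_add_distrib, mul_sum]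
  congr 1 <;> exact sum_congr rfl fun x _ => by ring

end Walsh

section QuadraticForm

variable {m n : ℕ}

def quadForm (A : Fin n → Fin n → ZMod m) (b : Fin n → ZMod m) (x : Fin n → Bool) : ℤ :=
  (∑ p ∈ univ.filter (fun p : Fin n × Fin n => p.1 < p.2),
      ((A p.1 p.2).val : ℤ) * boolSign (x p.1) * boolSign (x p.2)) +
    ∑ p, ((b p).val : ℤ) * boolSign (x p)

lemma fourierCoeffQuad'_eq_walshCoeff (A : Fin n → Fin n → ZMod m) (b : Fin n → ZMod m)
    (S : Finset (Fin n)) :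
    fourierCoeffQuad' m n A b S = walshCoeff (fun x => expMod m (quadForm A b x)) S := by
  rw [walshCoeff, Fintype.card_fin]
  rfl

lemma quadForm_add_edge [NeZero m] {A A' : Fin n → Fin n → ZMod m} (b : Fin n → ZMod m)
    {i j : Fin n} (hij : i < j) (a : ZMod m)
    (hA' : ∀ p q, A' p q = if (p, q) = (i, j) then A p q + a else A p q) (x : Fin n → Bool) :
    quadForm A' b x ≡ quadForm A b x + a.val * walsh {i, j} x [ZMOD m] := by
  have hA'_eq : ∀ p : Fin n × Fin n, A' p.1 p.2 = A p.1 p.2 + if p = (i, j) then a else 0 := by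
    intro p
    rw [hA']
    split_ifs <;> simp
  rw [← ZMod.intCast_eq_intCast_iff, walsh_pair hij.ne]
  simp only [quadForm]
  push_cast [ZMod.natCast_val, ZMod.cast_id', id]
  simp only [hA'_eq, add_mul, sum_add_distrib, ite_mul, zero_mul, sum_ite_eq', mem_filter,
    mem_univ, true_and, hij, if_true]
  ring

lemma fourierCoeffQuad'_add_edge [NeZero m] {A A' : Fin n → Fin n → ZMod m}
    (b : Fin n → ZMod m) {i j : Fin n} (hij : i < j) (a : ZMod m)
    (hA' : ∀ p q, A' p q = if (p, q) = (i, j) then A p q + a else A p q) (S : Finset (Fin n)) :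
    fourierCoeffQuad' m n A' b S =
      Real.cos (2 * π * a.val / m) * fourierCoeffQuad' m n A b S +
        Real.sin (2 * π * a.val / m) * I * fourierCoeffQuad' m n A b (symmDiff S {i, j}) := by
  have hphase : ∀ x, expMod m (quadForm A' b x) =
      (Real.cos (2 * π * a.val / m) + walsh {i, j} x * (Real.sin (2 * π * a.val / m) * I)) *
        expMod m (quadForm A b x) := by
    intro x
    rw [expMod_congr (quadForm_add_edge b hij a hA' x), expMod_add, mul_comm,
      expMod_mul_of_isUnit m _ (walsh_isUnit _ x), Int.cast_walsh]
    push_cast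
    rfl
  simp only [fourierCoeffQuad'_eq_walshCoeff, hphase, walshCoeff_const_add_walsh_mul]

end QuadraticForm

theorem stmt_18_general (m n : ℕ) [NeZero m]
    (A A' : Fin n → Fin n → ZMod m) (b : Fin n → ZMod m)
    (i j : Fin n) (hij : i < j) (a : ZMod m)
    (hA' : ∀ p q, A' p q = if (p, q) = (i, j) then A p q + a else A p q)
    (S : Finset (Fin n)) :
    ‖fourierCoeffQuad' m n A' b S‖ ≤
      Real.sqrt 2 *
        Finset.univ.sup' Finset.univ_nonempty
          (fun T : Finset (Fin n) => ‖fourierCoeffQuad' m n A b T‖) := by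
  have hle_sup : ∀ T, ‖fourierCoeffQuad' m n A b T‖ ≤
      Finset.univ.sup' Finset.univ_nonempty (fun T => ‖fourierCoeffQuad' m n A b T‖) :=
    fun T => le_sup' (fun T => ‖fourierCoeffQuad' m n A b T‖) (mem_univ T)
  rw [fourierCoeffQuad'_add_edge b hij a hA' S]
  exact norm_cos_mul_add_sin_mul_I_mul_le _ (hle_sup S) (hle_sup _)

theorem stmt_18 (m n : ℕ) [NeZero m] (hm : 3 ≤ m) (hodd : Odd m)
    (A A' : Fin n → Fin n → ZMod m) (b : Fin n → ZMod m)
    (i j : Fin n) (hij : i < j) (a : ZMod m)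
    (hA' : ∀ p q, A' p q = if (p, q) = (i, j) then A p q + a else A p q)
    (S : Finset (Fin n)) :
    ‖fourierCoeffQuad' m n A' b S‖ ≤
      Real.sqrt 2 *
        Finset.univ.sup' Finset.univ_nonempty
          (fun T : Finset (Fin n) => ‖fourierCoeffQuad' m n A b T‖) :=
  stmt_18_general m n A A' b i j hij a hA' S
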